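/- arXiv:2105.05765 — 3 statements merged into one kernel-verified Lean document; each statement's English description precedes it below -/
import Mathlib

section
/- Every face of a compact convex subset E of a finite-dimensional real vector space is closed. -/
/-- Every face of a compact convex subset `E` of `ℝⁿ` is closed. A face is a convex
subset `F ⊆ E` such that whenever `a, b ∈ E` and the open segment between them meets
`F`, the whole segment `[a,b]` lies in `F`. -/
theorem face_of_compact_convex_isClosed
    {n : ℕ} {E F : Set (EuclideanSpace ℝ (Fin n))}
    (hEc : IsCompact E) (hEconv : Convex ℝ E)
    (hFE : F ⊆ E) (hFconv : Convex ℝ F)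
    (hface : ∀ a ∈ E, ∀ b ∈ E,
      (openSegment ℝ a b ∩ F).Nonempty → segment ℝ a b ⊆ F) :
    IsClosed F := by
  rcases F.eq_empty_or_nonempty with rfl | hFne
  · exact isClosed_empty
  -- pick a point in the intrinsic interior of F
  obtain ⟨y, hy⟩ := hFne.intrinsicInterior hFconv
  rw [mem_intrinsicInterior] at hy
  obtain ⟨y', hy'int, hy'⟩ := hy
  have hyF : y ∈ F := by
    have := interior_subset hy'int
    simpa [hy'] using this
  have hES : IsClosed E := hEc.isClosed
  -- it suffices to show closure F ⊆ F
  refine isClosed_of_closure_subset ?_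
  intro x hx
  have hxE : x ∈ E := hES.closure_subset_iff.2 hFE hx
  by_cases hxy : x = y
  · exact hxy ▸ hyF
  -- the affine span of F is closed, so x lies in it
  have hspan_closed : IsClosed (affineSpan ℝ F : Set (EuclideanSpace ℝ (Fin n))) :=
    (affineSpan ℝ F).closed_of_finiteDimensional
  have hxspan : x ∈ affineSpan ℝ F :=
    hspan_closed.closure_subset_iff.2 (subset_affineSpan ℝ F) hx
  have hyspan : y ∈ affineSpan ℝ F := subset_affineSpan ℝ F hyF
  -- find an ε-ball (within the span) around y contained in F
  obtain ⟨ε, hε, hball⟩ := Metric.mem_nhds_iff.1 (mem_interior_iff_mem_nhds.1 hy'int)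
  -- choose t small and set b = y + t • (y - x)
  have hxyne : (0:ℝ) < ‖y - x‖ := by
    rw [norm_pos_iff, sub_ne_zero]
    exact fun h => hxy h.symm
  set t : ℝ := min (ε / (2 * ‖y - x‖)) 1 with ht_def
  have ht0 : 0 < t := lt_min (by positivity) one_pos
  set b : EuclideanSpace ℝ (Fin n) := y + t • (y - x) with hb_def
  have hbspan : b ∈ affineSpan ℝ F := by
    have := AffineSubspace.smul_vsub_vadd_mem (affineSpan ℝ F) t hyspan hxspan hyspan
    simpa [hb_def, vsub_eq_sub, vadd_eq_add, add_comm] using this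
  have hbF : b ∈ F := by
    have hdist : dist (⟨b, hbspan⟩ : affineSpan ℝ F) y' < ε := by
      rw [Subtype.dist_eq, hy']
      simp only [hb_def, dist_eq_norm, add_sub_cancel_left, norm_smul, Real.norm_eq_abs,
        abs_of_pos ht0]
      calc t * ‖y - x‖ ≤ (ε / (2 * ‖y - x‖)) * ‖y - x‖ :=
            mul_le_mul_of_nonneg_right (min_le_left _ _) (le_of_lt hxyne)
        _ = ε / 2 := by field_simp
        _ < ε := by linarith
    have := hball hdist
    simpa using this
  have hbE : b ∈ E := hFE hbF
  -- y lies on the open segment from x to b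
  have h1t : (0:ℝ) < 1 + t := by positivity
  have hyseg : y ∈ openSegment ℝ x b := by
    refine ⟨t / (1 + t), 1 / (1 + t), by positivity, by positivity, by field_simp; ring, ?_⟩
    rw [hb_def]
    match_scalars <;> field_simp <;> ring
  -- the face property forces x ∈ F
  exact hface x hxE b hbE ⟨y, hyseg, hyF⟩ (left_mem_segment ℝ x b)
end

section
/- Let G be a Lie group with Lie algebra 𝔤 and let β ∈ 𝔤. Then the set G^{β+} = {g ∈ G : lim_{t→-∞} exp(tβ) g exp(-tβ) exists} is a subgroup of G. -/
open Filter Topology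

def Subgroup.convergentAlong {ι G H : Type*} [Group G] [Group H] [TopologicalSpace H]
    [IsTopologicalGroup H] (σ : ι → G →* H) (l : Filter ι) : Subgroup G where
  carrier := {g | ∃ L : H, Tendsto (fun i => σ i g) l (𝓝 L)}
  one_mem' := ⟨1, by simpa only [map_one] using tendsto_const_nhds⟩
  mul_mem' := by
    rintro a b ⟨La, ha⟩ ⟨Lb, hb⟩
    exact ⟨La * Lb, by simpa only [map_mul] using ha.mul hb⟩
  inv_mem' := by
    rintro a ⟨La, ha⟩
    exact ⟨La⁻¹, by simpa only [map_inv] using ha.inv⟩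

theorem Gbeta_plus_is_subgroup_general
    {G : Type*} [Group G] [TopologicalSpace G] [IsTopologicalGroup G]
    (φ : ℝ → G) :
    let S : Set G :=
      {g : G | ∃ L : G, Tendsto (fun t : ℝ => φ t * g * (φ t)⁻¹) atBot (𝓝 L)}
    (1 : G) ∈ S ∧ (∀ a ∈ S, ∀ b ∈ S, a * b ∈ S) ∧ (∀ a ∈ S, a⁻¹ ∈ S) := by
  intro S
  let K := Subgroup.convergentAlong (fun t => (MulAut.conj (φ t)).toMonoidHom) atBot
  have hS : S = K := rfl
  rw [hS]
  exact ⟨K.one_mem, fun _ ha _ hb => K.mul_mem ha hb, fun _ ha => K.inv_mem ha⟩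

/-- Let `G` be a Lie group (here: a Hausdorff topological group) and let
`φ : t ↦ exp (t β)` be the one-parameter subgroup generated by `β` in the Lie algebra.
Then `G^{β+} = {g : lim_{t → -∞} exp(tβ) g exp(-tβ) exists}` is a subgroup of `G`:
it contains the identity and is closed under multiplication and inversion. -/
theorem Gbeta_plus_is_subgroup
    {G : Type*} [Group G] [TopologicalSpace G] [IsTopologicalGroup G] [T2Space G]
    (φ : ℝ → G) (hφ : Continuous φ) (hφ0 : φ 0 = 1)
    (hφadd : ∀ s t : ℝ, φ (s + t) = φ s * φ t) :
    let S : Set G :=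
      {g : G | ∃ L : G, Tendsto (fun t : ℝ => φ t * g * (φ t)⁻¹) atBot (𝓝 L)}
    (1 : G) ∈ S ∧ (∀ a ∈ S, ∀ b ∈ S, a * b ∈ S) ∧ (∀ a ∈ S, a⁻¹ ∈ S) :=
  Gbeta_plus_is_subgroup_general φ
end

section
/- Let G be a Lie group with Lie algebra 𝔤 and β ∈ 𝔤. Then R^{β+} = {g ∈ G : lim_{t→-∞} exp(tβ) g exp(-tβ) = e} is a normal subgroup of G^{β+} = {g ∈ G : lim_{t→-∞} exp(tβ) g exp(-tβ) exists}. -/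
open Filter Topology

/-! Conjugation by `φ t` is a group automorphism for every `t`, and multiplication and inversion
are continuous, so limits of conjugates multiply: the elements contracted to `1` form a subgroup,
and conjugating such an element by one whose conjugates converge to `L` gives conjugates
converging to `L * 1 * L⁻¹ = 1`. -/

section

variable {ι G H : Type*} [Group G] [Group H] [TopologicalSpace H] [IsTopologicalGroup H]

def tendstoOneSubgroup (f : ι → G →* H) (l : Filter ι) : Subgroup G where
  carrier := {g | Tendsto (fun t => f t g) l (𝓝 1)}
  one_mem' := by simpa using tendsto_const_nhds
  mul_mem' ha hb := by simpa using ha.mul hb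
  inv_mem' ha := by simpa using ha.inv

@[simp]
theorem mem_tendstoOneSubgroup {f : ι → G →* H} {l : Filter ι} {g : G} :
    g ∈ tendstoOneSubgroup f l ↔ Tendsto (fun t => f t g) l (𝓝 1) :=
  Iff.rfl

theorem conj_mem_tendstoOneSubgroup {f : ι → G →* H} {l : Filter ι} {g r : G} {L : H}
    (hg : Tendsto (fun t => f t g) l (𝓝 L)) (hr : r ∈ tendstoOneSubgroup f l) :
    g * r * g⁻¹ ∈ tendstoOneSubgroup f l := by
  simpa using (hg.mul hr).mul hg.inv

end

theorem Rbeta_plus_normal_in_Gbeta_plus_general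
    {G : Type*} [Group G] [TopologicalSpace G] [IsTopologicalGroup G]
    (φ : ℝ → G) :
    let S : Set G :=
      {g : G | ∃ L : G, Tendsto (fun t : ℝ => φ t * g * (φ t)⁻¹) atBot (𝓝 L)}
    let R : Set G :=
      {g : G | Tendsto (fun t : ℝ => φ t * g * (φ t)⁻¹) atBot (𝓝 (1 : G))}
    R ⊆ S ∧ (1 : G) ∈ R ∧ (∀ a ∈ R, ∀ b ∈ R, a * b ∈ R) ∧ (∀ a ∈ R, a⁻¹ ∈ R) ∧
      (∀ g ∈ S, ∀ r ∈ R, g * r * g⁻¹ ∈ R) := by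
  intro S R
  let conj : ℝ → G →* G := fun t => (MulAut.conj (φ t)).toMonoidHom
  let K := tendstoOneSubgroup conj atBot
  exact ⟨fun g hg => ⟨1, hg⟩, K.one_mem, fun a ha b hb => K.mul_mem ha hb,
    fun a ha => K.inv_mem ha, fun g ⟨L, hL⟩ r hr => conj_mem_tendstoOneSubgroup (f := conj) hL hr⟩

/-- With `φ : t ↦ exp(tβ)` the one-parameter subgroup generated by `β`, the set
`R^{β+} = {g : lim_{t→-∞} exp(tβ) g exp(-tβ) = e}` is a normal subgroup of
`G^{β+} = {g : lim_{t→-∞} exp(tβ) g exp(-tβ) exists}`: it is contained in `G^{β+}`,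
is a subgroup, and is stable under conjugation by elements of `G^{β+}`. -/
theorem Rbeta_plus_normal_in_Gbeta_plus
    {G : Type*} [Group G] [TopologicalSpace G] [IsTopologicalGroup G] [T2Space G]
    (φ : ℝ → G) (hφ : Continuous φ) (hφ0 : φ 0 = 1)
    (hφadd : ∀ s t : ℝ, φ (s + t) = φ s * φ t) :
    let S : Set G :=
      {g : G | ∃ L : G, Tendsto (fun t : ℝ => φ t * g * (φ t)⁻¹) atBot (𝓝 L)}
    let R : Set G :=
      {g : G | Tendsto (fun t : ℝ => φ t * g * (φ t)⁻¹) atBot (𝓝 (1 : G))}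
    R ⊆ S ∧ (1 : G) ∈ R ∧ (∀ a ∈ R, ∀ b ∈ R, a * b ∈ R) ∧ (∀ a ∈ R, a⁻¹ ∈ R) ∧
      (∀ g ∈ S, ∀ r ∈ R, g * r * g⁻¹ ∈ R) :=
  Rbeta_plus_normal_in_Gbeta_plus_general φ
end
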